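/- arXiv:math/0306322 — 14 statements merged into one kernel-verified Lean document; each statement's English description precedes it below -/
import Mathlib

section
/- Let B be a flat overring of an integral domain A. Then every ideal J of B is extended from A, namely J = (J ∩ A)·B. -/
theorem stmt1 {K : Type*} [Field K] (A B : Subring K) (h : A ≤ B)
    (hfrac : ∀ x : K, ∃ a b : A, (b : K) ≠ 0 ∧ x = (a : K) / (b : K))
    (hflat : letI := (Subring.inclusion h).toAlgebra; Module.Flat A B)
    (J : Ideal B) :
    J = Ideal.map (Subring.inclusion h) (Ideal.comap (Subring.inclusion h) J) := by
  letI := (Subring.inclusion h).toAlgebra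
  refine le_antisymm ?_ (Ideal.map_comap_le)
  intro x hx
  obtain ⟨a, b, hb, hab⟩ := hfrac (x : K)
  have hsmul : ∀ (c : A) (z : B), c • z = Subring.inclusion h c * z := fun c z => rfl
  have hcoe : ∀ c : A, ((Subring.inclusion h c : B) : K) = c := fun c => rfl
  -- relation b • x - a • 1 = 0 in B
  have hrel : (∑ i : ULift.{0} (Fin 2), (![b, -a] i.down) • (![x, 1] i.down) : B) = 0 := by
    rw [← Fintype.sum_equiv (Equiv.ulift (α := Fin 2) : ULift.{0} (Fin 2) ≃ Fin 2).symm
      (fun i : Fin 2 => (![b, -a] i) • (![x, 1] i : B))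
      (fun i => (![b, -a] i.down) • (![x, 1] i.down)) (fun i => rfl)]
    rw [Fin.sum_univ_two]
    simp only [Matrix.cons_val_zero, Matrix.cons_val_one, Matrix.head_cons]
    apply Subtype.ext
    rw [hsmul, hsmul]
    push_cast [hcoe]
    rw [hab]
    field_simp
    ring
  obtain ⟨κ, c, y, hxy, hc⟩ := hflat.isTrivialRelation_of_sum_smul_eq_zero hrel
  set C : Fin κ → A := fun j => c ⟨0⟩ j with hC
  set D : Fin κ → A := fun j => c ⟨1⟩ j with hD
  have hx0 : x = ∑ j, C j • y j := hxy ⟨0⟩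
  have hbc : ∀ j, b * C j - a * D j = 0 := by
    intro j
    have h2 := hc j
    rw [← Fintype.sum_equiv (Equiv.ulift (α := Fin 2) : ULift.{0} (Fin 2) ≃ Fin 2).symm
      (fun i : Fin 2 => (![b, -a] i) * c ⟨i⟩ j)
      (fun i => (![b, -a] i.down) * c i j) (fun i => rfl)] at h2
    rw [Fin.sum_univ_two] at h2
    simp only [Matrix.cons_val_zero, Matrix.cons_val_one, Matrix.head_cons] at h2
    rw [sub_eq_add_neg]
    simpa [neg_mul] using h2
  -- each C j lies in comap J
  have hCJ : ∀ j, C j ∈ Ideal.comap (Subring.inclusion h) J := by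
    intro j
    have hbcj : (b : K) * (C j : K) - (a : K) * (D j : K) = 0 := by
      have h0 : ((b * C j - a * D j : A) : K) = 0 := by rw [hbc j]; push_cast; ring
      push_cast at h0
      linear_combination h0
    have key : Subring.inclusion h (C j) = Subring.inclusion h (D j) * x := by
      apply Subtype.ext
      push_cast [hcoe]
      rw [hab, ← mul_div_assoc, eq_div_iff hb]
      linear_combination hbcj
    show Subring.inclusion h (C j) ∈ J
    rw [key]
    exact J.mul_mem_left _ hx
  -- conclude
  rw [hx0]
  refine Ideal.sum_mem _ fun j _ => ?_
  rw [hsmul]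
  exact Ideal.mul_mem_right _ _ (Ideal.mem_map_of_mem _ (hCJ j))
end

section
/- Let A be an integral domain and P a prime ideal of A. Then P is the radical of a principal ideal if and only if for every family Q of prime ideals of A, if P is contained in the union of the primes in Q, then P is contained in some member of Q. -/
/-!
If `P = √(c)`, then `c` lies in any prime cover of `P`, and the member containing `c` contains
`√(c) = P`. Conversely, applying the covering property to the family of primes not containing `P`
yields some `c ∈ P` outside all of them; every prime containing `c` then contains `P`, so
`√(c) = P` since `P` is radical.
-/

namespace Ideal

variable {R : Type*} [CommSemiring R]

theorem exists_radical_span_singleton_le_of_subset_biUnion {𝒬 : Set (Ideal R)} {c : R}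
    (hprime : ∀ Q ∈ 𝒬, Q.IsPrime)
    (hcov : ((span {c}).radical : Set R) ⊆ ⋃ Q ∈ 𝒬, (Q : Set R)) :
    ∃ Q ∈ 𝒬, (span {c}).radical ≤ Q := by
  obtain ⟨Q, hQ, hcQ⟩ := Set.mem_iUnion₂.mp (hcov (le_radical (mem_span_singleton_self c)))
  exact ⟨Q, hQ, (hprime Q hQ).radical_le_iff.mpr (span_singleton_le_iff_mem Q |>.mpr hcQ)⟩

theorem radical_span_singleton_eq_of_forall_isPrime {P : Ideal R} (hP : P.IsRadical) {c : R}
    (hc : c ∈ P) (h : ∀ Q : Ideal R, Q.IsPrime → c ∈ Q → P ≤ Q) :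
    (span {c}).radical = P := by
  refine le_antisymm ((radical_mono ((span_singleton_le_iff_mem P).mpr hc)).trans hP) ?_
  rw [radical_eq_sInf]
  exact le_sInf fun Q ⟨hcQ, hQ⟩ ↦ h Q hQ ((span_singleton_le_iff_mem Q).mp hcQ)

theorem exists_mem_forall_isPrime_of_forall_subset_biUnion {P : Ideal R}
    (h : ∀ 𝒬 : Set (Ideal R), (∀ Q ∈ 𝒬, Q.IsPrime) →
      (P : Set R) ⊆ (⋃ Q ∈ 𝒬, (Q : Set R)) → ∃ Q ∈ 𝒬, P ≤ Q) :
    ∃ c ∈ P, ∀ Q : Ideal R, Q.IsPrime → c ∈ Q → P ≤ Q := by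
  have hnot : ¬ (P : Set R) ⊆ ⋃ Q ∈ {Q : Ideal R | Q.IsPrime ∧ ¬ P ≤ Q}, (Q : Set R) := by
    intro hsub
    obtain ⟨Q, ⟨-, hnle⟩, hle⟩ := h _ (fun Q hQ ↦ hQ.1) hsub
    exact hnle hle
  obtain ⟨c, hcP, hcU⟩ := Set.not_subset.mp hnot
  refine ⟨c, hcP, fun Q hQ hcQ ↦ ?_⟩
  by_contra hPQ
  exact hcU (Set.mem_biUnion ⟨hQ, hPQ⟩ hcQ)

end Ideal

theorem stmt4_general {A : Type*} [CommRing A] (P : Ideal A) (hP : P.IsPrime) :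
    (∃ c : A, P = (Ideal.span {c}).radical) ↔
      ∀ 𝒬 : Set (Ideal A), (∀ Q ∈ 𝒬, Q.IsPrime) →
        (P : Set A) ⊆ (⋃ Q ∈ 𝒬, (Q : Set A)) → ∃ Q ∈ 𝒬, P ≤ Q := by
  constructor
  · rintro ⟨c, rfl⟩ 𝒬 hprime hcov
    exact Ideal.exists_radical_span_singleton_le_of_subset_biUnion hprime hcov
  · intro h
    obtain ⟨c, hcP, hc⟩ := Ideal.exists_mem_forall_isPrime_of_forall_subset_biUnion h
    exact ⟨c, (Ideal.radical_span_singleton_eq_of_forall_isPrime hP.isRadical hcP hc).symm⟩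

theorem stmt4 {A : Type*} [CommRing A] [IsDomain A] (P : Ideal A) (hP : P.IsPrime) :
    (∃ c : A, P = (Ideal.span {c}).radical) ↔
      ∀ 𝒬 : Set (Ideal A), (∀ Q ∈ 𝒬, Q.IsPrime) →
        (P : Set A) ⊆ (⋃ Q ∈ 𝒬, (Q : Set A)) → ∃ Q ∈ 𝒬, P ≤ Q :=
  stmt4_general P hP
end

section
/- Let A be an integral domain with fraction field K, let 𝒫 be a set of prime ideals of A, and let B = ⋂_{P∈𝒫} A_P. If B = A_S for some multiplicatively closed subset S of A, then for every x ∈ K with (A :_A x) ⊆ ⋃_{P∈𝒫} P, there exists P ∈ 𝒫 with (A :_A x) ⊆ P. -/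
/-
Suppose `(A :_A x) ⊄ P` for every `P ∈ 𝒫`. A denominator `a ∉ P` writes `x = (a x) / a` in `A_P`,
so `x ∈ B = A_S`, say `x = a / s` with `s ∈ S`. Then `s ∈ (A :_A x)` lies in some `P₀ ∈ 𝒫`; but
`s⁻¹ ∈ A_S ⊆ A_{P₀}`, and `s⁻¹ = b / t` with `t ∉ P₀` forces `t = b s ∈ P₀`.
-/

/-- The localization `A_P` of a subring `A` of a field `K` at a prime `P`,
viewed as a subset of `K`. -/
def locAt {K : Type*} [Field K] (A : Subring K) (P : Ideal A) : Set K :=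
  {x : K | ∃ a s : A, s ∉ P ∧ x = (a : K) / (s : K)}

section locAt

variable {K : Type*} [Field K] {A : Subring K} {P : Ideal A}

theorem mem_locAt_of_mul_mem {x : K} {a : A} (ha : (a : K) * x ∈ A) (haP : a ∉ P) :
    x ∈ locAt A P := by
  have ha0 : (a : K) ≠ 0 := by exact_mod_cast fun h : a = 0 => haP (h ▸ P.zero_mem)
  exact ⟨⟨_, ha⟩, a, haP, by field_simp⟩

theorem notMem_of_inv_mem_locAt {s : A} (hs : (s : K) ≠ 0) (hinv : (s : K)⁻¹ ∈ locAt A P) :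
    s ∉ P := by
  obtain ⟨b, t, htP, hbt⟩ := hinv
  have ht : (t : K) ≠ 0 := by exact_mod_cast fun h : t = 0 => htP (h ▸ P.zero_mem)
  have htbs : t = b * s := Subtype.coe_injective <| by
    rw [inv_eq_one_div, div_eq_div_iff hs ht] at hbt
    push_cast
    linear_combination hbt
  exact fun hsP => htP (htbs ▸ P.mul_mem_left b hsP)

end locAt

theorem stmt5_general {K : Type*} [Field K] (A B : Subring K)
    (PP : Set (Ideal A))
    (hB : ∀ x : K, x ∈ B ↔ ∀ P ∈ PP, x ∈ locAt A P)
    (S : Set A)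
    (hS0 : (0 : A) ∉ S)
    (hloc : ∀ x : K, x ∈ B ↔ ∃ a : A, ∃ s ∈ S, x = (a : K) / (s : K)) :
    ∀ x : K, ({a : A | (a : K) * x ∈ A} ⊆ ⋃ P ∈ PP, (P : Set A)) →
      ∃ P ∈ PP, {a : A | (a : K) * x ∈ A} ⊆ (P : Set A) := by
  intro x hx
  by_contra! hcon
  have hxB : x ∈ B := (hB x).mpr fun P hP => by
    obtain ⟨a, ha, haP⟩ := Set.not_subset.mp (hcon P hP)
    exact mem_locAt_of_mul_mem ha haP
  obtain ⟨a, s, hsS, rfl⟩ := (hloc x).mp hxB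
  have hs : (s : K) ≠ 0 := by exact_mod_cast fun h : s = 0 => hS0 (h ▸ hsS)
  have hsD : (s : K) * (a / s) ∈ A := by
    rw [mul_div_cancel₀ _ hs]
    exact a.2
  obtain ⟨P₀, hP₀, hsP₀⟩ := Set.mem_iUnion₂.mp (hx hsD)
  have hinv : (s : K)⁻¹ ∈ B := (hloc _).mpr ⟨1, s, hsS, by simp⟩
  exact notMem_of_inv_mem_locAt hs ((hB _).mp hinv P₀ hP₀) hsP₀

theorem stmt5 {K : Type*} [Field K] (A B : Subring K) (hAB : A ≤ B)
    (hfrac : ∀ x : K, ∃ a b : A, (b : K) ≠ 0 ∧ x = (a : K) / (b : K))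
    (PP : Set (Ideal A)) (hprime : ∀ P ∈ PP, P.IsPrime)
    (hB : ∀ x : K, x ∈ B ↔ ∀ P ∈ PP, x ∈ locAt A P)
    (S : Set A) (hS1 : (1 : A) ∈ S) (hSmul : ∀ s ∈ S, ∀ t ∈ S, s * t ∈ S)
    (hS0 : (0 : A) ∉ S)
    (hloc : ∀ x : K, x ∈ B ↔ ∃ a : A, ∃ s ∈ S, x = (a : K) / (s : K)) :
    ∀ x : K, ({a : A | (a : K) * x ∈ A} ⊆ ⋃ P ∈ PP, (P : Set A)) →
      ∃ P ∈ PP, {a : A | (a : K) * x ∈ A} ⊆ (P : Set A) :=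
  stmt5_general A B PP hB S hS0 hloc
end

section
/- Let A be an integral domain with fraction field K, let 𝒫 be a set of prime ideals of A, and set B = ⋂_{P∈𝒫} A_P. Suppose that for every x ∈ K \ A, if (A :_A x) ⊆ ⋃_{P∈𝒫} P then (A :_A x) ⊆ P for some P ∈ 𝒫. Then B = A_S, where S = A \ ⋃_{P∈𝒫} P; in particular B is a localization of A. -/
section

variable {K : Type*} [Field K] {A : Subring K}

theorem exists_notMem_mul_mem_of_mem_locAt {P : Ideal A} {x : K} (hx : x ∈ locAt A P)
    (hxA : x ∉ A) : ∃ s : A, s ∉ P ∧ (s : K) * x ∈ A := by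
  obtain ⟨a, s, hsP, rfl⟩ := hx
  have hs : (s : K) ≠ 0 := by
    rintro hs
    exact hxA (by simp [hs])
  exact ⟨s, hsP, by simp [mul_div_cancel₀ _ hs]⟩

theorem mem_locAt_of_notMem {P : Ideal A} {a s : A} (hsP : s ∉ P) :
    (a : K) / (s : K) ∈ locAt A P :=
  ⟨a, s, hsP, rfl⟩

theorem not_subset_biUnion_of_forall_mem_locAt {PP : Set (Ideal A)}
    (hproper : ∀ P ∈ PP, P ≠ ⊤)
    (hyp : ∀ x : K, x ∉ A →
      ({a : A | (a : K) * x ∈ A} ⊆ ⋃ P ∈ PP, (P : Set A)) →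
      ∃ P ∈ PP, {a : A | (a : K) * x ∈ A} ⊆ (P : Set A))
    {x : K} (hx : ∀ P ∈ PP, x ∈ locAt A P) :
    ¬ {a : A | (a : K) * x ∈ A} ⊆ ⋃ P ∈ PP, (P : Set A) := by
  intro hsub
  by_cases hxA : x ∈ A
  · have hone : (1 : A) ∈ ⋃ P ∈ PP, (P : Set A) := hsub (by simpa using hxA)
    simp only [Set.mem_iUnion, SetLike.mem_coe, exists_prop] at hone
    obtain ⟨P, hP, h1P⟩ := hone
    exact hproper P hP ((Ideal.eq_top_iff_one P).mpr h1P)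
  · obtain ⟨P, hP, hconductor⟩ := hyp x hxA hsub
    obtain ⟨s, hsP, hsx⟩ := exists_notMem_mul_mem_of_mem_locAt (hx P hP) hxA
    exact hsP (hconductor hsx)

end

theorem stmt6 {K : Type*} [Field K] (A : Subring K)
    (hfrac : ∀ x : K, ∃ a b : A, (b : K) ≠ 0 ∧ x = (a : K) / (b : K))
    (PP : Set (Ideal A)) (hprime : ∀ P ∈ PP, P.IsPrime)
    (hyp : ∀ x : K, x ∉ A →
      ({a : A | (a : K) * x ∈ A} ⊆ ⋃ P ∈ PP, (P : Set A)) →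
      ∃ P ∈ PP, {a : A | (a : K) * x ∈ A} ⊆ (P : Set A)) :
    {x : K | ∀ P ∈ PP, x ∈ locAt A P} =
      {x : K | ∃ a s : A, (s : K) ≠ 0 ∧ (∀ P ∈ PP, s ∉ P) ∧ x = (a : K) / (s : K)} := by
  ext x
  refine ⟨fun hx => ?_, fun ⟨a, s, _, hsP, hxas⟩ P hP => hxas ▸ mem_locAt_of_notMem (hsP P hP)⟩
  obtain hPP | ⟨P₀, hP₀⟩ := PP.eq_empty_or_nonempty
  · obtain ⟨a, b, hb, hxab⟩ := hfrac x
    exact ⟨a, b, hb, by simp [hPP], hxab⟩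
  have hproper : ∀ P ∈ PP, P ≠ ⊤ := fun P hP => (hprime P hP).ne_top
  obtain ⟨s, hsx, hsPP⟩ :=
    Set.not_subset.mp (not_subset_biUnion_of_forall_mem_locAt hproper hyp hx)
  simp only [Set.mem_iUnion, SetLike.mem_coe, not_exists] at hsPP
  have hs : (s : K) ≠ 0 := fun h => hsPP P₀ hP₀ ((Subtype.ext h : s = 0) ▸ P₀.zero_mem)
  exact ⟨⟨(s : K) * x, hsx⟩, s, hs, hsPP, by field_simp⟩
end

section
/- A well-centered ring extension of a Noetherian commutative ring is Noetherian: if R ⊆ S are commutative rings such that every element of S is an associate in S of an element of R, and R is Noetherian, then S is Noetherian. -/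
section WellCentered

variable {R S : Type*} [Semiring R] [Semiring S]

def RingHom.IsWellCentered (f : R →+* S) : Prop :=
  ∀ s : S, ∃ u : Sˣ, (u : S) * s ∈ Set.range f

namespace RingHom.IsWellCentered

variable {f : R →+* S}

theorem map_comap (hf : f.IsWellCentered) (I : Ideal S) : (I.comap f).map f = I := by
  refine le_antisymm Ideal.map_comap_le fun s hs => ?_
  obtain ⟨u, r, hr⟩ := hf s
  have hr_mem : r ∈ I.comap f := by
    rw [Ideal.mem_comap, hr]
    exact I.mul_mem_left _ hs
  have hus : (u : S) * s ∈ (I.comap f).map f := hr ▸ Ideal.mem_map_of_mem f hr_mem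
  simpa using Ideal.mul_mem_left _ (↑u⁻¹ : S) hus

theorem isNoetherianRing (hf : f.IsWellCentered) [IsNoetherianRing R] : IsNoetherianRing S := by
  refine (isNoetherianRing_iff_ideal_fg S).mpr fun I => ?_
  rw [← hf.map_comap I]
  exact ((isNoetherianRing_iff_ideal_fg R).mp ‹_› _).map f

end RingHom.IsWellCentered

end WellCentered

theorem stmt8 {S : Type*} [CommRing S] (R : Subring S)
    (hwc : ∀ s : S, ∃ u : Sˣ, (u : S) * s ∈ R)
    (hR : IsNoetherianRing R) :
    IsNoetherianRing S :=
  have hwc' : R.subtype.IsWellCentered := by simpa [RingHom.IsWellCentered] using hwc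
  hwc'.isNoetherianRing
end

section
/- Let S be a well-centered extension ring of a commutative ring R, and let M be a maximal ideal of R such that MS ≠ S. Then MS is a maximal ideal of S. -/
/-! An ideal `J` of `S` strictly above `MS` contains some `x ∉ MS`; its unit multiple `r = u x`
lies in `R`, in `J`, and not in `M`, so `J ⊇ (M + Rr)S = S`. -/

theorem Ideal.eq_top_of_map_le_of_map_mem {R S : Type*} [CommRing R] [Semiring S] (f : R →+* S)
    {M : Ideal R} (hM : M.IsMaximal) {J : Ideal S} (hMJ : M.map f ≤ J) {r : R} (hr : r ∉ M)
    (hrJ : f r ∈ J) : J = ⊤ := by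
  have hMr : M ⊔ span {r} = ⊤ := hM.1.2 _ (left_lt_sup.2 (by simpa [span_le]))
  rw [eq_top_iff, ← map_top f, ← hMr, map_sup, map_span, Set.image_singleton]
  exact sup_le hMJ (span_le.2 (Set.singleton_subset_iff.2 hrJ))

theorem stmt9 {S : Type*} [CommRing S] (R : Subring S)
    (hwc : ∀ s : S, ∃ u : Sˣ, (u : S) * s ∈ R)
    (M : Ideal R) (hM : M.IsMaximal)
    (hMS : Ideal.map R.subtype M ≠ ⊤) :
    (Ideal.map R.subtype M).IsMaximal := by
  refine ⟨⟨hMS, fun J hlt => ?_⟩⟩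
  obtain ⟨x, hxJ, hxM⟩ := SetLike.exists_of_lt hlt
  obtain ⟨u, hu⟩ := hwc x
  have hr : (⟨u * x, hu⟩ : R) ∉ M := fun hrM =>
    hxM ((Ideal.unit_mul_mem_iff_mem _ u.isUnit).1 (Ideal.mem_map_of_mem R.subtype hrM))
  exact Ideal.eq_top_of_map_le_of_map_mem R.subtype hM hlt.le hr (J.mul_mem_left _ hxJ)
end

section
/- Let S be an almost well-centered extension of a commutative ring R. Then for every ideal J of S, Rad(J) = Rad((J ∩ R)·S). -/
lemma Subring.mem_map_subtype_comap_subtype {S : Type*} [CommRing S] {R : Subring S}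
    {J : Ideal S} {x : S} (hxR : x ∈ R) (hxJ : x ∈ J) :
    x ∈ Ideal.map R.subtype (Ideal.comap R.subtype J) :=
  Ideal.mem_map_of_mem R.subtype (show (⟨x, hxR⟩ : R) ∈ Ideal.comap R.subtype J from hxJ)

lemma Subring.mem_radical_map_comap_of_unit_mul_pow_mem {S : Type*} [CommRing S]
    {R : Subring S} {J : Ideal S} {s : S} (hs : s ∈ J) {n : ℕ} (hn : 0 < n) (u : Sˣ)
    (hu : (u : S) * s ^ n ∈ R) :
    s ∈ (Ideal.map R.subtype (Ideal.comap R.subtype J)).radical := by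
  have huJ : (u : S) * s ^ n ∈ J := J.mul_mem_left _ (J.pow_mem_of_mem hs n hn)
  have hmem := Subring.mem_map_subtype_comap_subtype hu huJ
  exact ⟨n, (Ideal.unit_mul_mem_iff_mem _ u.isUnit).mp hmem⟩

theorem stmt10 {S : Type*} [CommRing S] (R : Subring S)
    (hawc : ∀ s : S, ∃ n : ℕ, 0 < n ∧ ∃ u : Sˣ, (u : S) * s ^ n ∈ R)
    (J : Ideal S) :
    J.radical = (Ideal.map R.subtype (Ideal.comap R.subtype J)).radical := by
  refine le_antisymm (Ideal.radical_le_radical_iff.mpr fun s hs => ?_)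
    (Ideal.radical_mono Ideal.map_comap_le)
  obtain ⟨n, hn, u, hu⟩ := hawc s
  exact Subring.mem_radical_map_comap_of_unit_mul_pow_mem hs hn u hu
end

section
/- Let B = K + M be an integral domain, where K is a field contained in B and M is a nonzero maximal ideal of B. If A is a subring of B containing M, then B is well-centered on A. -/
/-! If `b = k + m` with `k ∈ K` nonzero and `m ∈ M`, then `k⁻¹ b = 1 + k⁻¹ m ∈ 1 + M ⊆ A`;
if `k = 0`, then `b` already lies in `M ⊆ A`. -/

theorem Subring.units_inv_mul_add_mem {B : Type*} [CommRing B] (A : Subring B) {M : Ideal B}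
    (hMA : (M : Set B) ⊆ A) (u : Bˣ) {m : B} (hm : m ∈ M) :
    ((u⁻¹ : Bˣ) : B) * (u + m) ∈ A := by
  rw [mul_add, Units.inv_mul]
  exact A.add_mem A.one_mem (hMA (M.mul_mem_left _ hm))

theorem stmt12_general {B : Type*} [CommRing B] (F : Subring B)
    (hF : ∀ x ∈ F, x ≠ 0 → ∃ y ∈ F, x * y = 1)
    (M : Ideal B)
    (hsum : ∀ b : B, ∃ k ∈ F, ∃ m ∈ M, b = k + m)
    (A : Subring B) (hMA : (M : Set B) ⊆ A) :
    ∀ b : B, ∃ v : Bˣ, (v : B) * b ∈ A := by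
  intro b
  obtain ⟨k, hk, m, hm, rfl⟩ := hsum b
  rcases eq_or_ne k 0 with rfl | hk0
  · exact ⟨1, by simpa using hMA hm⟩
  · obtain ⟨y, -, hky⟩ := hF k hk hk0
    exact ⟨(Units.mkOfMulEqOne k y hky)⁻¹, A.units_inv_mul_add_mem hMA _ hm⟩

theorem stmt12 {B : Type*} [CommRing B] [IsDomain B] (F : Subring B)
    (hF : ∀ x ∈ F, x ≠ 0 → ∃ y ∈ F, x * y = 1)
    (M : Ideal B) (hM : M.IsMaximal) (hM0 : M ≠ ⊥)
    (hsum : ∀ b : B, ∃ k ∈ F, ∃ m ∈ M, b = k + m)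
    (A : Subring B) (hMA : (M : Set B) ⊆ A) :
    ∀ b : B, ∃ v : Bˣ, (v : B) * b ∈ A :=
  stmt12_general F hF M hsum A hMA
end

section
/- Let A = ℚ + (X²−2)·ℚ[X] ⊆ B = ℚ[X]. Then no power of X+1 is an associate in B of an element of A; hence B is not almost well-centered on A. -/
/-!
Evaluating at the root `√2` of `X ^ 2 - 2` turns a relation `c * (X + 1) ^ n = q + (X ^ 2 - 2) * r`
into `c * (√2 + 1) ^ n = q` with `c ≠ 0`. But for `n ≥ 1` the power `(√2 + 1) ^ n` has the form
`a + b * √2` with `b > 0` rational, so it is irrational.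
-/

lemma exists_rat_sqrt_two_add_one_pow_eq {n : ℕ} (hn : 1 ≤ n) :
    ∃ a b : ℚ, 0 ≤ a ∧ 0 < b ∧ (√2 + 1) ^ n = a + b * √2 := by
  induction n, hn using Nat.le_induction with
  | base => exact ⟨1, 1, zero_le_one, one_pos, by simp [add_comm]⟩
  | succ m _ ih =>
    obtain ⟨a, b, ha, hb, h⟩ := ih
    refine ⟨a + 2 * b, a + b, by positivity, by positivity, ?_⟩
    rw [pow_succ, h]
    push_cast
    linear_combination (b : ℝ) * Real.mul_self_sqrt zero_le_two

lemma irrational_sqrt_two_add_one_pow {n : ℕ} (hn : 1 ≤ n) : Irrational ((√2 + 1) ^ n) := by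
  obtain ⟨a, b, -, hb, h⟩ := exists_rat_sqrt_two_add_one_pow_eq hn
  rw [h]
  exact (irrational_sqrt_two.ratCast_mul hb.ne').ratCast_add a

open Polynomial in
theorem stmt13 :
    ¬ ∃ (n : ℕ), 0 < n ∧ ∃ (u : (Polynomial ℚ)ˣ) (q : ℚ) (r : Polynomial ℚ),
      (u : Polynomial ℚ) * (X + 1) ^ n = C q + (X ^ 2 - 2) * r := by
  rintro ⟨n, hn, u, q, r, h⟩
  obtain ⟨c, hc, hu⟩ := Polynomial.isUnit_iff.mp u.isUnit
  have h_eval := congrArg (aeval √2) h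
  rw [← hu] at h_eval
  simp only [map_mul, map_add, map_sub, map_pow, map_ofNat, aeval_X, aeval_C, map_one,
    Real.sq_sqrt zero_le_two, sub_self, zero_mul, add_zero] at h_eval
  exact ((irrational_sqrt_two_add_one_pow hn).ratCast_mul hc.ne_zero).ne_rat q h_eval
end

section
/- Let B be a well-centered overring of an integral domain A with A ⊊ B. Then there exists a unit of B that is not a unit of A, i.e., U(A) ⊊ U(B). -/
theorem stmt14 {K : Type*} [Field K] (A B : Subring K) (hAB : A ≤ B) (hne : A ≠ B)
    (hfrac : ∀ x : K, ∃ a b : A, (b : K) ≠ 0 ∧ x = (a : K) / (b : K))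
    (hwc : ∀ b ∈ B, ∃ u : Bˣ, ((u : B) : K) * b ∈ A) :
    ∃ u : Bˣ, ¬ ((((u : Bˣ) : B) : K) ∈ A ∧ (((u⁻¹ : Bˣ) : B) : K) ∈ A) := by
  by_contra h
  push_neg at h
  apply hne
  apply le_antisymm hAB
  intro b hb
  obtain ⟨u, hu⟩ := hwc b hb
  have hinv : (((u⁻¹ : Bˣ) : B) : K) ∈ A := (h u).2
  have key : b = (((u⁻¹ : Bˣ) : B) : K) * (((u : B) : K) * b) := by
    rw [← mul_assoc]
    have : (((u⁻¹ : Bˣ) : B) : K) * ((u : B) : K) = 1 := by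
      have := u.inv_mul
      exact_mod_cast congrArg (fun x : B => (x : K)) this
    rw [this, one_mul]
  rw [key]
  exact A.mul_mem hinv hu
end

section
/- Let B = A[u] be a flat overring of an integral domain A, where u is a unit of B. Then there is a positive integer m such that u^{-r} ∈ A for all integers r ≥ m; consequently B = A[u^{m+1}] is a localization of A at the powers of u^{-(m+1)}. -/
universe u
set_option maxHeartbeats 1000000

theorem auxFlat {K : Type u} [Field K] {A B : Subring K} (h : A ≤ B)
    (hfrac : ∀ x : K, ∃ a b : A, (b : K) ≠ 0 ∧ x = (a : K) / (b : K))
    (hflat : letI := (Subring.inclusion h).toAlgebra; Module.Flat A B)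
    (b : K) (hb : b ∈ B) :
    ∃ (κ : Type u) (_ : Fintype κ) (t y : κ → K),
      (∀ i, t i ∈ A) ∧ (∀ i, y i ∈ B) ∧ (1 : K) = ∑ i, t i * y i ∧ ∀ i, t i * b ∈ A := by
  letI := (Subring.inclusion h).toAlgebra
  haveI hfl : Module.Flat A B := hflat
  have hsmul : ∀ (a : A) (c : B), ((a • c : B) : K) = (a : K) * (c : K) := by
    intro a c
    rw [Algebra.smul_def, RingHom.algebraMap_toAlgebra]
    rfl
  obtain ⟨a, d, hd0, hab⟩ := hfrac b
  have hdb : (d : K) * b = (a : K) := by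
    rw [hab]; field_simp
  set ι := ULift.{u} (Fin 2) with hι
  have hsum2 : ∀ {M : Type u} [AddCommMonoid M] (g : ι → M),
      ∑ i, g i = g ⟨0⟩ + g ⟨1⟩ := by
    intro M _ g
    rw [← (Equiv.ulift (α := Fin 2)).symm.sum_comp g, Fin.sum_univ_two]
    rfl
  set f : ι → A := fun i => if i.down = 0 then d else -a with hf
  set x : ι → B := fun i => if i.down = 0 then ⟨b, hb⟩ else 1 with hx
  have hrel : ∑ i, f i • x i = 0 := by
    apply Subtype.ext
    push_cast [hsum2 (fun i => f i • x i), hsmul]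
    simp only [hf, hx]
    norm_num
    linear_combination hdb
  have hres := Module.Flat.isTrivialRelation_of_sum_smul_eq_zero (R := ↥A) (M := ↥B) (ι := ι) (f := f) (x := x) hrel
  obtain ⟨k, aa, yy, hxy, hfa⟩ := hres
  refine ⟨ULift.{u} (Fin k), inferInstance, fun j => ((aa ⟨1⟩ j.down : A) : K), fun j => (yy j.down : K),
    fun j => (aa ⟨1⟩ j.down).2, fun j => (yy j.down).2, ?_, ?_⟩
  · rw [← (Equiv.ulift (α := Fin k)).symm.sum_comp
      (fun j : ULift.{u} (Fin k) => ((aa ⟨1⟩ j.down : A) : K) * (yy j.down : K))]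
    have h1 : x ⟨1⟩ = ∑ j, aa ⟨1⟩ j • yy j := hxy ⟨1⟩
    have : ((x ⟨1⟩ : B) : K) = ((∑ j, aa ⟨1⟩ j • yy j : B) : K) := by rw [h1]
    rw [show ((x ⟨1⟩ : B) : K) = 1 from rfl] at this
    rw [this]
    push_cast
    exact Finset.sum_congr rfl fun j _ => hsmul _ _
  · rintro ⟨j⟩
    show ((aa ⟨1⟩ j : A) : K) * b ∈ A
    have h2 := hfa j
    have h2' : (d : K) * (aa ⟨0⟩ j : K) = (a : K) * (aa ⟨1⟩ j : K) := by
      have := congrArg (Subring.subtype A) h2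
      push_cast [hsum2 (fun i => f i * aa i j)] at this
      simp only [hf] at this
      norm_num at this
      linear_combination this
    have : (aa ⟨1⟩ j : K) * b = (aa ⟨0⟩ j : K) := by
      have hd : (d : K) ≠ 0 := hd0
      apply mul_left_cancel₀ hd
      linear_combination (aa ⟨1⟩ j : K) * hdb - h2'
    rw [this]
    exact (aa ⟨0⟩ j).2
set_option maxHeartbeats 1000000

theorem auxCombine {K : Type u} [Field K] (A B : Subring K) (v : K)
    (hstep : ∀ b : K, b ∈ B → ∃ (κ : Type u) (_ : Fintype κ) (t y : κ → K),
      (∀ i, t i ∈ A) ∧ (∀ i, y i ∈ B) ∧ (1 : K) = ∑ i, t i * y i ∧ ∀ i, t i * b ∈ A)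
    (hv : ∀ k : ℕ, v ^ k ∈ B) :
    ∀ k : ℕ, ∃ (κ : Type u) (_ : Fintype κ) (t y : κ → K),
      (∀ i, t i ∈ A) ∧ (∀ i, y i ∈ B) ∧ (1 : K) = ∑ i, t i * y i ∧
      ∀ i, ∀ j ≤ k, t i * v ^ j ∈ A := by
  intro k
  induction k with
  | zero =>
    refine ⟨PUnit, inferInstance, fun _ => 1, fun _ => 1, fun _ => one_mem A,
      fun _ => one_mem B, by simp, ?_⟩
    intro i j hj
    interval_cases j
    simpa using one_mem A
  | succ k ih =>
    obtain ⟨κ₁, i₁, t, y, htA, hyB, hsum, htv⟩ := ih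
    obtain ⟨κ₂, i₂, c, z, hcA, hzB, hsum2, hcv⟩ := hstep (v ^ (k + 1)) (hv (k + 1))
    refine ⟨κ₁ × κ₂, inferInstance, fun p => t p.1 * c p.2, fun p => y p.1 * z p.2,
      fun p => mul_mem (htA p.1) (hcA p.2), fun p => mul_mem (hyB p.1) (hzB p.2), ?_, ?_⟩
    · rw [Fintype.sum_prod_type]
      have : (1 : K) = (∑ i, t i * y i) * (∑ i, c i * z i) := by
        rw [← hsum, ← hsum2, one_mul]
      rw [this, Finset.sum_mul_sum]
      exact Finset.sum_congr rfl fun i _ => Finset.sum_congr rfl fun l _ => by ring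
    · rintro ⟨i, l⟩ j hj
      rcases Nat.lt_or_ge j (k + 1) with hlt | hge
      · have : t i * c l * v ^ j = (t i * v ^ j) * c l := by ring
        rw [this]
        exact mul_mem (htv i j (Nat.lt_succ_iff.mp hlt)) (hcA l)
      · have hj' : j = k + 1 := le_antisymm hj hge
        subst hj'
        have : t i * c l * v ^ (k + 1) = t i * (c l * v ^ (k + 1)) := by ring
        rw [this]
        exact mul_mem (htA i) (hcv l)

theorem auxSpan {K : Type u} [Field K] (A : Subring K) (v : K) (n : ℕ) (e : ℕ → K)
    (he : ∀ j, e j ∈ A) (hvn : v ^ (n + 1) = ∑ j ∈ Finset.range (n + 1), e j * v ^ j) :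
    ∀ r : ℕ, ∃ c : ℕ → K, (∀ j, c j ∈ A) ∧ v ^ r = ∑ j ∈ Finset.range (n + 1), c j * v ^ j := by
  intro r
  induction r with
  | zero =>
    refine ⟨fun j => if j = 0 then 1 else 0, fun j => by
      dsimp only
      split
      · exact one_mem A
      · exact zero_mem A, ?_⟩
    simp only [ite_mul, one_mul, zero_mul]
    rw [Finset.sum_ite_eq' (Finset.range (n + 1)) 0 (fun j => v ^ j)]
    simp
  | succ r ih =>
    obtain ⟨c, hc, hcr⟩ := ih
    refine ⟨fun j => (if j = 0 then 0 else c (j - 1)) + c n * e j, ?_, ?_⟩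
    · intro j
      refine add_mem ?_ (mul_mem (hc n) (he j))
      split
      · exact zero_mem A
      · exact hc _
    · have h1 : v ^ (r + 1) = (∑ j ∈ Finset.range (n + 1), c j * v ^ j) * v := by
        rw [← hcr]; ring
      have h2 : ∑ j ∈ Finset.range (n + 1),
          ((if j = 0 then 0 else c (j - 1)) + c n * e j) * v ^ j
          = (∑ j ∈ Finset.range (n + 1), (if j = 0 then (0:K) else c (j - 1)) * v ^ j)
            + c n * ∑ j ∈ Finset.range (n + 1), e j * v ^ j := by
        rw [Finset.mul_sum, ← Finset.sum_add_distrib]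
        exact Finset.sum_congr rfl fun j _ => by ring
      have h3 : ∑ j ∈ Finset.range (n + 1), (if j = 0 then (0:K) else c (j - 1)) * v ^ j
          = ∑ j ∈ Finset.range n, c j * v ^ (j + 1) := by
        rw [Finset.sum_range_succ']
        simp
      rw [h1, Finset.sum_mul, Finset.sum_range_succ, h2, h3, ← hvn]
      have hterm : ∀ j : ℕ, c j * v ^ j * v = c j * v ^ (j + 1) := fun j => by
        rw [pow_succ]; ring
      rw [Finset.sum_congr rfl fun j _ => hterm j, hterm n]

theorem auxMemB {K : Type u} [Field K] (A B : Subring K) (u : K)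
    (hB : B = Subring.closure ((A : Set K) ∪ {u})) :
    ∀ x : K, x ∈ B ↔ ∃ p : Polynomial A, x = Polynomial.eval₂ (Subring.subtype A) u p := by
  intro x
  constructor
  · intro hx
    rw [hB] at hx
    have hle : Subring.closure ((A : Set K) ∪ {u}) ≤
        (Polynomial.eval₂RingHom (Subring.subtype A) u).range := by
      apply Subring.closure_le.mpr
      rintro z (hz | hz)
      · exact ⟨Polynomial.C ⟨z, hz⟩, by simp⟩
      · rw [Set.mem_singleton_iff] at hz
        exact ⟨Polynomial.X, by simp [hz.symm]⟩
    obtain ⟨p, hp⟩ := hle hx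
    exact ⟨p, hp.symm⟩
  · rintro ⟨p, rfl⟩
    have hu : u ∈ B := hB ▸ Subring.subset_closure (Set.mem_union_right _ rfl)
    have hA : ∀ a : A, (a : K) ∈ B := fun a =>
      hB ▸ Subring.subset_closure (Set.mem_union_left _ a.2)
    induction p using Polynomial.induction_on' with
    | add p q hp hq => rw [Polynomial.eval₂_add]; exact add_mem hp hq
    | monomial n a => rw [Polynomial.eval₂_monomial]; exact mul_mem (hA a) (pow_mem hu n)

theorem stmt16 {K : Type*} [Field K] (A B : Subring K) (h : A ≤ B) (u : K)
    (hfrac : ∀ x : K, ∃ a b : A, (b : K) ≠ 0 ∧ x = (a : K) / (b : K))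
    (hB : B = Subring.closure ((A : Set K) ∪ {u}))
    (hu : ∃ v ∈ B, u * v = 1)
    (hflat : letI := (Subring.inclusion h).toAlgebra; Module.Flat A B) :
    ∃ m : ℕ, 0 < m ∧ (∀ r : ℕ, m ≤ r → u⁻¹ ^ r ∈ A) ∧
      ∀ x : K, x ∈ B ↔ ∃ a : A, ∃ n : ℕ, x = (a : K) * (u ^ (m + 1)) ^ n := by
  obtain ⟨w, hwB, hw⟩ := hu
  have hu0 : u ≠ 0 := left_ne_zero_of_mul_eq_one hw
  have hvB : u⁻¹ ∈ B := by
    have : w = u⁻¹ := eq_inv_of_mul_eq_one_left (by rw [mul_comm]; exact hw)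
    exact this ▸ hwB
  have huB : u ∈ B := hB ▸ Subring.subset_closure (Set.mem_union_right _ rfl)
  have hpow2 : ∀ e M : ℕ, e ≤ M → u⁻¹ ^ e * u ^ M = u ^ (M - e) := by
    intro e M heM
    rw [inv_pow, inv_mul_eq_iff_eq_mul₀ (pow_ne_zero e hu0), ← pow_add]
    congr 1
    omega
  have hpow1 : ∀ j d : ℕ, j ≤ d → u ^ j * u⁻¹ ^ d = u⁻¹ ^ (d - j) := by
    intro j d hjd
    apply mul_left_cancel₀ (pow_ne_zero (d - j) hu0)
    rw [← mul_assoc, ← pow_add, show d - j + j = d by omega, inv_pow, inv_pow,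
      mul_inv_cancel₀ (pow_ne_zero d hu0), mul_inv_cancel₀ (pow_ne_zero (d - j) hu0)]
  have memB_sum : ∀ x : K, x ∈ B → ∃ (d : ℕ) (a : ℕ → K),
      (∀ j, a j ∈ A) ∧ x = ∑ j ∈ Finset.range (d + 1), a j * u ^ j := by
    intro x hx
    obtain ⟨p, rfl⟩ := (auxMemB A B u hB x).mp hx
    exact ⟨p.natDegree, fun j => ((p.coeff j : K)), fun j => (p.coeff j).2,
      Polynomial.eval₂_eq_sum_range _ _⟩
  -- representation of u⁻¹ and integrality
  obtain ⟨d₀, aV, haV, hvrep⟩ := memB_sum u⁻¹ hvB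
  have h1 : u⁻¹ ^ (d₀ + 1) = ∑ j ∈ Finset.range (d₀ + 1), aV j * u⁻¹ ^ (d₀ - j) := by
    have hstart : u⁻¹ ^ (d₀ + 1)
        = (∑ j ∈ Finset.range (d₀ + 1), aV j * u ^ j) * u⁻¹ ^ d₀ := by
      rw [← hvrep, ← pow_succ']
    rw [hstart, Finset.sum_mul]
    refine Finset.sum_congr rfl fun j hj => ?_
    rw [mul_assoc, hpow1 j d₀ (Nat.lt_succ_iff.mp (Finset.mem_range.mp hj))]
  have hvn : u⁻¹ ^ (d₀ + 1) = ∑ j ∈ Finset.range (d₀ + 1), aV (d₀ - j) * u⁻¹ ^ j := by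
    rw [← Finset.sum_range_reflect (fun j => aV j * u⁻¹ ^ (d₀ - j)) (d₀ + 1)] at h1
    rw [h1]
    refine Finset.sum_congr rfl fun j hj => ?_
    have hj' : j ≤ d₀ := Nat.lt_succ_iff.mp (Finset.mem_range.mp hj)
    have e1 : d₀ + 1 - 1 - j = d₀ - j := by omega
    have e2 : d₀ - (d₀ - j) = j := by omega
    rw [e1, e2]
  have hspan := auxSpan A u⁻¹ d₀ (fun j => aV (d₀ - j)) (fun j => haV _) hvn
  -- conductor elements from flatness
  have hstep := fun b hb => auxFlat h hfrac hflat b hb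
  obtain ⟨κ, iκ, t, y, htA, hyB, hsum1, htv⟩ :=
    auxCombine A B u⁻¹ hstep (fun k => pow_mem hvB k) d₀
  have htall : ∀ i (r : ℕ), t i * u⁻¹ ^ r ∈ A := by
    intro i r
    obtain ⟨c, hcA, hcr⟩ := hspan r
    rw [hcr, Finset.mul_sum]
    refine sum_mem fun j hj => ?_
    have : t i * (c j * u⁻¹ ^ j) = c j * (t i * u⁻¹ ^ j) := by ring
    rw [this]
    exact mul_mem (hcA j) (htv i j (Nat.lt_succ_iff.mp (Finset.mem_range.mp hj)))
  have hyr := fun i => memB_sum (y i) (hyB i)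
  choose D aY haY hyrep using hyr
  set N := (Finset.univ.sup D) + 1 with hN
  have hmA : ∀ r : ℕ, N ≤ r → u⁻¹ ^ r ∈ A := by
    intro r hr
    have e1 : u⁻¹ ^ r = ∑ i, (t i * y i) * u⁻¹ ^ r := by
      rw [← Finset.sum_mul, ← hsum1, one_mul]
    rw [e1]
    refine sum_mem fun i _ => ?_
    have e2 : (t i * y i) * u⁻¹ ^ r
        = ∑ j ∈ Finset.range (D i + 1), aY i j * (t i * u⁻¹ ^ (r - j)) := by
      rw [hyrep i, Finset.mul_sum, Finset.sum_mul]
      refine Finset.sum_congr rfl fun j hj => ?_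
      have hjr : j ≤ r := by
        have h2 : j ≤ D i := Nat.lt_succ_iff.mp (Finset.mem_range.mp hj)
        have h3 : D i ≤ Finset.univ.sup D := Finset.le_sup (Finset.mem_univ i)
        omega
      have e3 : t i * (aY i j * u ^ j) * u⁻¹ ^ r
          = aY i j * (t i * (u ^ j * u⁻¹ ^ r)) := by ring
      rw [e3, hpow1 j r hjr]
    rw [e2]
    exact sum_mem fun j _ => mul_mem (haY i j) (htall i _)
  refine ⟨N, Nat.succ_pos _, hmA, fun x => ⟨?_, ?_⟩⟩
  · intro hx
    obtain ⟨dx, ax, haxA, hxr⟩ := memB_sum x hx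
    set n := dx + N with hn
    have h5 : n ≤ (N + 1) * n := Nat.le_mul_of_pos_left n (by omega)
    have hsA : (∑ j ∈ Finset.range (dx + 1), ax j * u⁻¹ ^ ((N + 1) * n - j)) ∈ A := by
      refine sum_mem fun j hj => ?_
      have hj' : j ≤ dx := Nat.lt_succ_iff.mp (Finset.mem_range.mp hj)
      exact mul_mem (haxA j) (hmA _ (by omega))
    refine ⟨⟨_, hsA⟩, n, ?_⟩
    show x = (∑ j ∈ Finset.range (dx + 1), ax j * u⁻¹ ^ ((N + 1) * n - j)) * (u ^ (N + 1)) ^ n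
    rw [← pow_mul, hxr, Finset.sum_mul]
    refine Finset.sum_congr rfl fun j hj => ?_
    have hj' : j ≤ dx := Nat.lt_succ_iff.mp (Finset.mem_range.mp hj)
    have hjn : j ≤ (N + 1) * n := by omega
    have e4 : ax j * u⁻¹ ^ ((N + 1) * n - j) * u ^ ((N + 1) * n)
        = ax j * (u⁻¹ ^ ((N + 1) * n - j) * u ^ ((N + 1) * n)) := by ring
    rw [e4, hpow2 _ _ (Nat.sub_le _ _), show (N + 1) * n - ((N + 1) * n - j) = j by omega]
  · rintro ⟨a, n, rfl⟩
    exact mul_mem (h a.2) (pow_mem (pow_mem huB (N + 1)) n)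
end

section
/- Let B = A[b] be a simple flat overring of an integral domain A. If some positive power of b is an associate in B of an element of A (i.e., bⁿ = a·u with a ∈ A, u ∈ Bˣ, n ≥ 1), then B is a localization of A. -/
universe u

set_option maxHeartbeats 2000000 in
lemma flat_crit {K : Type u} [Field K] (A B : Subring K) (h : A ≤ B)
    (hfrac : ∀ x : K, ∃ a c : A, (c : K) ≠ 0 ∧ x = (a : K) / (c : K))
    (hflat : letI := (Subring.inclusion h).toAlgebra; Module.Flat A B)
    (x : K) (hx : x ∈ B) :
    ∃ (κ : Type u) (_ : Fintype κ) (s y : κ → K),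
      (∀ j, s j ∈ A) ∧ (∀ j, s j * x ∈ A) ∧ (∀ j, y j ∈ B) ∧ ∑ j, s j * y j = 1 := by
  letI := (Subring.inclusion h).toAlgebra
  haveI hfl : Module.Flat A B := hflat
  obtain ⟨a, c, hc0, hxac⟩ := hfrac x
  have hcx : (c : K) * x = a := by
    rw [hxac]; field_simp
  have coes : ∀ (t : ↥A) (z : ↥B), ((t • z : ↥B) : K) = (t : K) * (z : K) := fun t z => rfl
  set e : ULift.{u} (Fin 2) ≃ Fin 2 := Equiv.ulift with he
  set f0 : Fin 2 → ↥A := ![c, -a] with hf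
  set m0 : Fin 2 → ↥B := ![⟨x, hx⟩, 1] with hm
  have hrel : ∑ i : ULift.{u} (Fin 2), f0 (e i) • m0 (e i) = 0 := by
    rw [Equiv.sum_comp e (fun i => f0 i • m0 i)]
    apply Subtype.ext
    push_cast [Fin.sum_univ_two, hf, hm, coes]
    push_cast [coes]
    rw [hcx]; ring
  obtain ⟨k, amat0, y0, hxy0, hfa0⟩ :=
    @Module.Flat.isTrivialRelation_of_sum_smul_eq_zero ↥A ↥B _ _ _ hfl _ _ _ _ hrel
  obtain ⟨κ, hκ, amat, y, hxy, hfa⟩ : ∃ (κ : Type u) (hκ : Fintype κ)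
      (amat : ULift.{u} (Fin 2) → κ → ↥A) (y : κ → ↥B),
      (∀ i, m0 (e i) = ∑ j, amat i j • y j) ∧ ∀ j, ∑ i, f0 (e i) * amat i j = 0 :=
    ⟨ULift.{u} (Fin k), inferInstance, fun i j => amat0 i j.down, fun j => y0 j.down,
      fun i => (hxy0 i).trans (Equiv.ulift.sum_comp (fun j => amat0 i j • y0 j)).symm,
      fun j => hfa0 j.down⟩
  refine ⟨κ, hκ, fun j => ((amat (e.symm 1) j : ↥A) : K), fun j => ((y j : ↥B) : K),
    fun j => (amat (e.symm 1) j).2, fun j => ?_, fun j => (y j).2, ?_⟩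
  · have h2 : ∑ i : ULift.{u} (Fin 2), f0 (e i) * amat i j = 0 := hfa j
    rw [← Equiv.sum_comp e.symm (fun i => f0 (e i) * amat i j)] at h2
    simp only [Equiv.apply_symm_apply] at h2
    rw [Fin.sum_univ_two] at h2
    have h2K : (c : K) * (amat (e.symm 0) j : K) + (-(a : K)) * (amat (e.symm 1) j : K) = 0 := by
      have := congrArg (fun t : ↥A => (t : K)) h2
      push_cast at this
      simpa [hf] using this
    have : (amat (e.symm 1) j : K) * x = (amat (e.symm 0) j : K) := by
      have hc : (c : K) * ((amat (e.symm 1) j : K) * x) = (c : K) * (amat (e.symm 0) j : K) := by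
        calc (c : K) * ((amat (e.symm 1) j : K) * x)
            = (amat (e.symm 1) j : K) * ((c : K) * x) := by ring
          _ = (amat (e.symm 1) j : K) * a := by rw [hcx]
          _ = (c : K) * (amat (e.symm 0) j : K) := by linear_combination -h2K
      exact mul_left_cancel₀ hc0 hc
    rw [this]; exact (amat (e.symm 0) j).2
  · have h1 : m0 (e (e.symm 1)) = ∑ j, amat (e.symm 1) j • y j := hxy (e.symm 1)
    have := congrArg (fun t : ↥B => (t : K)) h1
    simp only [hm, Equiv.apply_symm_apply, Matrix.cons_val_one, Matrix.head_cons] at this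
    push_cast [coes] at this
    exact this.symm

set_option maxHeartbeats 2000000 in
/-- Richman: a "flat" (in the denominator-ideal sense) integral overring extension is trivial. -/
lemma richman_step {K : Type u} [Field K] (C B : Subring K) (hCB : C ≤ B)
    (hint : ∀ z ∈ B, IsIntegral ↥C (z : K))
    (hcrit : ∀ x ∈ B, ∃ (κ : Type u) (_ : Fintype κ) (s y : κ → K),
      (∀ j, s j ∈ C) ∧ (∀ j, s j * x ∈ C) ∧ (∀ j, y j ∈ B) ∧ ∑ j, s j * y j = 1) :
    B ≤ C := by
  intro x hx
  by_contra hxC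
  letI alg : Algebra ↥C ↥B := (Subring.inclusion hCB).toAlgebra
  have halgmap : ∀ c : ↥C, ((algebraMap ↥C ↥B c : ↥B) : K) = (c : K) := fun c => rfl
  haveI : Algebra.IsIntegral ↥C ↥B := by
    constructor
    intro z
    let f : ↥B →ₐ[↥C] K :=
      { toFun := fun w => (w : K)
        map_one' := rfl
        map_mul' := fun _ _ => rfl
        map_zero' := rfl
        map_add' := fun _ _ => rfl
        commutes' := fun c => rfl }
    have hinj : Function.Injective f := Subtype.val_injective
    exact (isIntegral_algHom_iff f hinj).mp (hint (z : K) z.2)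
  -- the denominator ideal of x in C
  let I : Ideal ↥C :=
    { carrier := {c : ↥C | (c : K) * x ∈ C}
      add_mem' := fun {p q} hp hq => by
        simp only [Set.mem_setOf_eq] at *
        push_cast
        rw [add_mul]; exact C.add_mem hp hq
      zero_mem' := by
        simp only [Set.mem_setOf_eq]
        push_cast
        rw [zero_mul]; exact C.zero_mem
      smul_mem' := fun c p hp => by
        simp only [Set.mem_setOf_eq] at *
        have : ((c * p : ↥C) : K) * x = (c : K) * ((p : K) * x) := by push_cast; ring
        rw [smul_eq_mul, this]
        exact C.mul_mem c.2 hp }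
  have hI : I ≠ ⊤ := by
    intro htop
    apply hxC
    have h1 : (1 : ↥C) ∈ I := htop ▸ Submodule.mem_top
    have h1' : ((1 : ↥C) : K) * x ∈ C := h1
    simpa using h1'
  obtain ⟨P, hPmax, hIP⟩ := Ideal.exists_le_maximal I hI
  haveI := hPmax.isPrime
  obtain ⟨Q, hQbot, hQprime, hQcomap⟩ :=
    Ideal.exists_ideal_over_prime_of_isIntegral P (⊥ : Ideal ↥B) (by
      intro c hc
      simp only [Ideal.mem_comap, Ideal.mem_bot] at hc
      have : (c : K) = 0 := by
        have := congrArg (fun t : ↥B => (t : K)) hc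
        simpa [halgmap] using this
      have : c = 0 := Subtype.ext this
      rw [this]; exact P.zero_mem)
  obtain ⟨κ, hκ, s, y, hsC, hsxC, hyB, hsum⟩ := hcrit x hx
  have hone : (1 : ↥B) ∈ Q := by
    have heq : (1 : ↥B) = ∑ j, (algebraMap ↥C ↥B ⟨s j, hsC j⟩) * ⟨y j, hyB j⟩ := by
      apply Subtype.ext
      push_cast
      rw [← hsum]
      rfl
    rw [heq]
    refine Ideal.sum_mem _ fun j _ => Q.mul_mem_right _ ?_
    have hmem : (⟨s j, hsC j⟩ : ↥C) ∈ P := hIP (hsxC j)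
    rw [← hQcomap] at hmem
    exact hmem
  exact hQprime.ne_top (Q.eq_top_of_isUnit_mem hone isUnit_one)

set_option maxHeartbeats 2000000 in
lemma pow_comb {K : Type u} [Field K] (A B : Subring K) (v : K)
    (hbase : ∃ (κ : Type u) (_ : Fintype κ) (s y : κ → K),
      (∀ j, s j ∈ A) ∧ (∀ j, s j * v ∈ A) ∧ (∀ j, y j ∈ B) ∧ ∑ j, s j * y j = 1) :
    ∀ r : ℕ, ∃ (κ : Type u) (_ : Fintype κ) (jf z : κ → K),
      (∀ t, jf t ∈ A ∧ (∀ i ≤ r, jf t * v ^ i ∈ A) ∧ z t ∈ B) ∧ ∑ t, jf t * z t = 1 := by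
  intro r
  induction r with
  | zero =>
    refine ⟨PUnit.{u+1}, inferInstance, fun _ => 1, fun _ => 1, fun t => ⟨A.one_mem, ?_, B.one_mem⟩, by simp⟩
    intro i hi
    interval_cases i
    simpa using A.one_mem
  | succ r ih =>
    obtain ⟨κ, hκ, jf, z, hp, hs⟩ := ih
    obtain ⟨κ', hκ', s, y, hsA, hsv, hyB, hsum'⟩ := hbase
    refine ⟨κ × κ', inferInstance, fun t => jf t.1 * s t.2, fun t => z t.1 * y t.2,
      fun t => ⟨A.mul_mem (hp t.1).1 (hsA t.2), ?_, B.mul_mem (hp t.1).2.2 (hyB t.2)⟩, ?_⟩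
    · intro i hi
      cases i with
      | zero => simpa using A.mul_mem (hp t.1).1 (hsA t.2)
      | succ i' =>
        have : jf t.1 * s t.2 * v ^ (i' + 1) = (jf t.1 * v ^ i') * (s t.2 * v) := by
          rw [pow_succ]; ring
        rw [this]
        exact A.mul_mem ((hp t.1).2.1 i' (Nat.succ_le_succ_iff.mp hi)) (hsv t.2)
    · rw [Fintype.sum_prod_type]
      have : ∀ t1 : κ, ∑ t2 : κ', jf t1 * s t2 * (z t1 * y t2)
          = (jf t1 * z t1) * ∑ t2 : κ', s t2 * y t2 := by
        intro t1
        rw [Finset.mul_sum]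
        exact Finset.sum_congr rfl fun t2 _ => by ring
      rw [Finset.sum_congr rfl fun t1 _ => this t1]
      simp only [hsum', mul_one]
      exact hs

/-- `B = S⁻¹A` for a multiplicatively closed set `S ⊆ A` of nonzero elements. -/
def IsLocOf {K : Type*} [Field K] (A B : Set K) : Prop :=
  ∃ S : Set K, S ⊆ A ∧ 1 ∈ S ∧ (∀ s ∈ S, ∀ t ∈ S, s * t ∈ S) ∧ (0 : K) ∉ S ∧
    B = {x : K | ∃ a ∈ A, ∃ s ∈ S, x = a / s}

set_option maxHeartbeats 2000000 in
lemma stmt17_aux {K : Type u} [Field K] (A B : Subring K) (h : A ≤ B) (b : K)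
    (hfrac : ∀ x : K, ∃ a c : A, (c : K) ≠ 0 ∧ x = (a : K) / (c : K))
    (hB : B = Subring.closure ((A : Set K) ∪ {b}))
    (hflat : letI := (Subring.inclusion h).toAlgebra; Module.Flat A B)
    (hassoc : ∃ n : ℕ, 0 < n ∧ ∃ a ∈ A, ∃ u v : K, u ∈ B ∧ v ∈ B ∧ u * v = 1 ∧
      b ^ n = a * u) :
    IsLocOf (A : Set K) (B : Set K) := by
  classical
  obtain ⟨n, hn, a, haA, u, v, huB, hvB, huv, hbn⟩ := hassoc
  have hvu : v * u = 1 := by rw [mul_comm]; exact huv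
  have hv0 : v ≠ 0 := fun hv => by rw [hv, mul_zero] at huv; exact one_ne_zero huv.symm
  -- the subring C = A[u]
  set C : Subring K := Subring.closure ((A : Set K) ∪ {u}) with hC
  have hAC : A ≤ C := fun z hz => Subring.subset_closure (Or.inl hz)
  have huC : u ∈ C := Subring.subset_closure (Or.inr rfl)
  have hCB : C ≤ B := by
    rw [hC]
    apply Subring.closure_le.mpr
    rintro z (hz | rfl)
    · exact h hz
    · exact huB
  have crit := flat_crit A B h hfrac hflat
  have critC : ∀ x ∈ B, ∃ (κ : Type u) (_ : Fintype κ) (s y : κ → K),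
      (∀ j, s j ∈ C) ∧ (∀ j, s j * x ∈ C) ∧ (∀ j, y j ∈ B) ∧ ∑ j, s j * y j = 1 := by
    intro x hx
    obtain ⟨κ, hκ, s, y, h1, h2, h3, h4⟩ := crit x hx
    exact ⟨κ, hκ, s, y, fun j => hAC (h1 j), fun j => hAC (h2 j), h3, h4⟩
  -- B is integral over C
  have hint : ∀ z ∈ B, IsIntegral ↥C (z : K) := by
    have hBsub : B ≤ (integralClosure ↥C K).toSubring := by
      rw [hB]
      apply Subring.closure_le.mpr
      rintro z (hz | hz)
      · have hzC : z ∈ C := hAC hz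
        have : IsIntegral ↥C z := isIntegral_algebraMap (x := (⟨z, hzC⟩ : ↥C))
        exact this
      · rw [Set.mem_singleton_iff] at hz
        rw [hz]
        have hauC : a * u ∈ C := C.mul_mem (hAC haA) huC
        have : IsIntegral ↥C b := by
          refine ⟨Polynomial.X ^ n - Polynomial.C (⟨a * u, hauC⟩ : ↥C),
            Polynomial.monic_X_pow_sub_C _ (Nat.pos_iff_ne_zero.mp hn), ?_⟩
          have hC' : (algebraMap ↥C K) (⟨a * u, hauC⟩ : ↥C) = a * u := rfl
          simp only [Polynomial.eval₂_sub, Polynomial.eval₂_pow, Polynomial.eval₂_X,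
            Polynomial.eval₂_C, hC']
          rw [hbn]; ring
        exact this
    intro z hz
    exact hBsub hz
  have hBC : B ≤ C := richman_step C B hCB hint critC
  -- elements of C are polynomials in u over A
  have hCadj : ∀ z ∈ C, ∃ q : Polynomial ↥A, Polynomial.aeval u q = z := by
    intro z hz
    have hle : C ≤ (Algebra.adjoin ↥A ({u} : Set K)).toSubring := by
      rw [hC]
      apply Subring.closure_le.mpr
      rintro w (hw | rfl)
      · exact (Algebra.adjoin ↥A ({u} : Set K)).algebraMap_mem (⟨w, hw⟩ : ↥A)
      · exact Algebra.subset_adjoin rfl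
    have hzadj : z ∈ Algebra.adjoin ↥A ({u} : Set K) := hle hz
    rw [Algebra.adjoin_singleton_eq_range_aeval] at hzadj
    obtain ⟨q, hq⟩ := hzadj
    exact ⟨q, hq⟩
  -- smul coercion
  have hsmul : ∀ (t : ↥A) (w : K), t • w = (t : K) * w := fun t w => rfl
  -- helper : u^k * v^M = v^(M-k) for k ≤ M
  have hukv : ∀ k M : ℕ, k ≤ M → u ^ k * v ^ M = v ^ (M - k) := by
    intro k M hkM
    have hvM : v ^ M = v ^ k * v ^ (M - k) := by rw [← pow_add]; congr 1; omega
    calc u ^ k * v ^ M = (u * v) ^ k * v ^ (M - k) := by rw [hvM, mul_pow]; ring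
      _ = v ^ (M - k) := by rw [huv, one_pow, one_mul]
  -- v as a polynomial in u
  obtain ⟨qv, hqv⟩ := hCadj v (hBC hvB)
  set r := qv.natDegree with hr
  have hvexp : v = ∑ i ∈ Finset.range (r + 1), (qv.coeff i : K) * u ^ i := by
    conv_lhs => rw [← hqv]
    rw [Polynomial.aeval_eq_sum_range]
    exact Finset.sum_congr rfl fun i _ => by rw [hsmul]
  -- the module W spanned by v^0, ..., v^r
  set W : Submodule ↥A K := Submodule.span ↥A ((fun i => v ^ i) '' Set.Iic r) with hW
  have hWi : ∀ i ≤ r, v ^ i ∈ W := fun i hi => Submodule.subset_span ⟨i, hi, rfl⟩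
  have hvpow_eq : v ^ (r + 1) = ∑ i ∈ Finset.range (r + 1), (qv.coeff i : K) * v ^ (r - i) := by
    have h1 : v ^ (r + 1) = (∑ i ∈ Finset.range (r + 1), (qv.coeff i : K) * u ^ i) * v ^ r := by
      rw [← hvexp, pow_succ]; ring
    rw [h1, Finset.sum_mul]
    refine Finset.sum_congr rfl fun i hi => ?_
    have hir : i ≤ r := Nat.lt_succ_iff.mp (Finset.mem_range.mp hi)
    rw [mul_assoc, hukv i r hir]
  have hWr1 : v ^ (r + 1) ∈ W := by
    rw [hvpow_eq]
    refine Submodule.sum_mem _ fun i hi => ?_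
    have : (qv.coeff i : K) * v ^ (r - i) = (qv.coeff i) • (v ^ (r - i)) := rfl
    rw [this]
    exact Submodule.smul_mem _ _ (hWi _ (Nat.sub_le _ _))
  have hmulv : ∀ w ∈ W, v * w ∈ W := by
    intro w hw
    induction hw using Submodule.span_induction with
    | mem x hx =>
      obtain ⟨i, hi, rfl⟩ := hx
      have : v * v ^ i = v ^ (i + 1) := (pow_succ' v i).symm
      rw [this]
      rcases Nat.lt_or_ge i r with hlt | hge
      · exact hWi (i + 1) hlt
      · have : i = r := le_antisymm hi hge
        rw [this]; exact hWr1
    | zero => rw [mul_zero]; exact W.zero_mem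
    | add x y hx hy ihx ihy => rw [mul_add]; exact W.add_mem ihx ihy
    | smul c x hx ihx =>
      have : v * (c • x) = c • (v * x) := by rw [hsmul, hsmul]; ring
      rw [this]; exact W.smul_mem _ ihx
  have hWpow : ∀ N : ℕ, v ^ N ∈ W := by
    intro N
    induction N with
    | zero => exact hWi 0 (Nat.zero_le r)
    | succ N ih =>
      have : v ^ (N + 1) = v * v ^ N := pow_succ' v N
      rw [this]; exact hmulv _ ih
  -- the combination
  obtain ⟨κ, hκ, jf, z, hprops, hsum1⟩ := pow_comb A B v (crit v hvB) r
  have hjfA : ∀ t, jf t ∈ A := fun t => (hprops t).1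
  have hjfW : ∀ t, ∀ w ∈ W, jf t * w ∈ A := by
    intro t w hw
    induction hw using Submodule.span_induction with
    | mem x hx =>
      obtain ⟨i, hi, rfl⟩ := hx
      exact (hprops t).2.1 i hi
    | zero => rw [mul_zero]; exact A.zero_mem
    | add x y hx hy ihx ihy => rw [mul_add]; exact A.add_mem ihx ihy
    | smul c x hx ihx =>
      have : jf t * (c • x) = (c : K) * (jf t * x) := by rw [hsmul]; ring
      rw [this]; exact A.mul_mem c.2 ihx
  have hjfpow : ∀ t (N : ℕ), jf t * v ^ N ∈ A := fun t N => hjfW t _ (hWpow N)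
  -- build the polynomial p with coefficients multiplying all powers of v into A
  choose qz hqz using fun t => hCadj (z t) (hBC ((hprops t).2.2))
  set p : Polynomial ↥A := ∑ t, (⟨jf t, hjfA t⟩ : ↥A) • qz t with hp
  have haev : Polynomial.aeval u p = 1 := by
    rw [hp, map_sum]
    have hterm : ∀ t, Polynomial.aeval u ((⟨jf t, hjfA t⟩ : ↥A) • qz t) = jf t * z t := by
      intro t
      rw [Polynomial.smul_eq_C_mul, map_mul, Polynomial.aeval_C, hqz t]
      rfl
    rw [Finset.sum_congr rfl fun t _ => hterm t]
    exact hsum1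
  have hcoeff : ∀ (k N : ℕ), (p.coeff k : K) * v ^ N ∈ A := by
    intro k N
    have hco : ((p.coeff k : ↥A) : K) = ∑ t, jf t * ((qz t).coeff k : K) := by
      rw [hp, Polynomial.finset_sum_coeff]
      push_cast [Polynomial.coeff_smul]
      rfl
    rw [hco, Finset.sum_mul]
    refine A.sum_mem fun t _ => ?_
    have : jf t * ((qz t).coeff k : K) * v ^ N = (jf t * v ^ N) * ((qz t).coeff k : K) := by ring
    rw [this]
    exact A.mul_mem (hjfpow t N) ((qz t).coeff k).2
  set N := p.natDegree with hN
  have hone : (1 : K) = ∑ k ∈ Finset.range (N + 1), (p.coeff k : K) * u ^ k := by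
    rw [← haev, Polynomial.aeval_eq_sum_range]
    exact Finset.sum_congr rfl fun i _ => by rw [hsmul]
  have hvN : ∀ M : ℕ, N ≤ M → v ^ M ∈ A := by
    intro M hM
    have hexp : v ^ M = ∑ k ∈ Finset.range (N + 1), (p.coeff k : K) * v ^ (M - k) := by
      calc v ^ M = (∑ k ∈ Finset.range (N + 1), (p.coeff k : K) * u ^ k) * v ^ M := by
            rw [← hone, one_mul]
        _ = ∑ k ∈ Finset.range (N + 1), (p.coeff k : K) * v ^ (M - k) := by
            rw [Finset.sum_mul]
            refine Finset.sum_congr rfl fun k hk => ?_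
            have hkN : k ≤ M := le_trans (Nat.lt_succ_iff.mp (Finset.mem_range.mp hk)) hM
            rw [mul_assoc, hukv k M hkN]
    rw [hexp]
    exact A.sum_mem fun k _ => hcoeff k (M - k)
  -- the multiplicative set S
  set Sset : Set K := {s : K | s ∈ A ∧ ∃ t, t ∈ B ∧ s * t = 1} with hSset
  have hS1 : (1 : K) ∈ Sset := ⟨A.one_mem, 1, B.one_mem, mul_one 1⟩
  have hSmul : ∀ s ∈ Sset, ∀ t ∈ Sset, s * t ∈ Sset := by
    rintro s ⟨hsA, t, htB, hst⟩ s' ⟨hs'A, t', ht'B, hst'⟩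
    exact ⟨A.mul_mem hsA hs'A, t * t', B.mul_mem htB ht'B, by
      rw [mul_mul_mul_comm, hst, hst', one_mul]⟩
  have hSne : ∀ s ∈ Sset, s ≠ 0 := by
    rintro s ⟨hsA, t, htB, hst⟩ rfl
    rw [zero_mul] at hst
    exact zero_ne_one hst
  -- v^(N+1) ∈ S and u = v^N / v^(N+1)
  have hvN1S : v ^ (N + 1) ∈ Sset := by
    refine ⟨hvN (N + 1) (Nat.le_succ N), u ^ (N + 1), B.pow_mem huB _, ?_⟩
    rw [← mul_pow, hvu, one_pow]
  have huloc : u = v ^ N / v ^ (N + 1) := by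
    rw [eq_div_iff (pow_ne_zero _ hv0)]
    have : v ^ (N + 1) = v * v ^ N := pow_succ' v N
    rw [this, ← mul_assoc, huv, one_mul]
  -- the localization subring
  set LocS : Subring K :=
    { carrier := {x : K | ∃ a' ∈ (A : Set K), ∃ s ∈ Sset, x = a' / s}
      one_mem' := ⟨1, A.one_mem, 1, hS1, (div_one 1).symm⟩
      zero_mem' := ⟨0, A.zero_mem, 1, hS1, by rw [zero_div]⟩
      add_mem' := by
        rintro x y ⟨ax, haxA, sx, hsx, rfl⟩ ⟨ay, hayA, sy, hsy, rfl⟩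
        refine ⟨ax * sy + sx * ay, A.add_mem (A.mul_mem haxA (hsy.1)) (A.mul_mem (hsx.1) hayA),
          sx * sy, hSmul _ hsx _ hsy, ?_⟩
        rw [div_add_div ax ay (hSne _ hsx) (hSne _ hsy)]
      neg_mem' := by
        rintro x ⟨a', ha'A, s, hs, rfl⟩
        exact ⟨-a', A.neg_mem ha'A, s, hs, (neg_div s a').symm⟩
      mul_mem' := by
        rintro x y ⟨ax, haxA, sx, hsx, rfl⟩ ⟨ay, hayA, sy, hsy, rfl⟩
        exact ⟨ax * ay, A.mul_mem haxA hayA, sx * sy, hSmul _ hsx _ hsy,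
          div_mul_div_comm ax sx ay sy⟩ } with hLocS
  have hCLoc : C ≤ LocS := by
    rw [hC]
    apply Subring.closure_le.mpr
    rintro w (hw | rfl)
    · exact ⟨w, hw, 1, hS1, (div_one w).symm⟩
    · exact ⟨v ^ N, hvN N le_rfl, v ^ (N + 1), hvN1S, huloc⟩
  -- conclusion
  refine ⟨Sset, fun s hs => hs.1, hS1, hSmul, fun h0 => hSne 0 h0 rfl, ?_⟩
  apply Set.ext
  intro x
  constructor
  · intro hxB
    exact hCLoc (hBC hxB)
  · rintro ⟨a', ha'A, s, hs, rfl⟩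
    obtain ⟨hsA, t, htB, hst⟩ := hs
    have hs0 : s ≠ 0 := hSne s ⟨hsA, t, htB, hst⟩
    have : a' / s = a' * t := by
      rw [div_eq_iff hs0, mul_assoc, mul_comm t s, hst, mul_one]
    rw [this]
    exact B.mul_mem (h ha'A) htB

theorem stmt17 {K : Type*} [Field K] (A B : Subring K) (h : A ≤ B) (b : K)
    (hfrac : ∀ x : K, ∃ a c : A, (c : K) ≠ 0 ∧ x = (a : K) / (c : K))
    (hB : B = Subring.closure ((A : Set K) ∪ {b}))
    (hflat : letI := (Subring.inclusion h).toAlgebra; Module.Flat A B)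
    (hassoc : ∃ n : ℕ, 0 < n ∧ ∃ a ∈ A, ∃ u v : K, u ∈ B ∧ v ∈ B ∧ u * v = 1 ∧
      b ^ n = a * u) :
    IsLocOf (A : Set K) (B : Set K) :=
  stmt17_aux A B h b hfrac hB hflat hassoc
end

section
/- Let B = A[u, 1/u] be a flat overring of an integral domain A, with u a unit of B. Then B = A[u + 1/u]. -/
universe u

set_option maxHeartbeats 2000000 in
theorem stmt18aux {K : Type u} [Field K] (A B : Subring K) (h : A ≤ B) (u : K)
    (hfrac : ∀ x : K, ∃ a b : A, (b : K) ≠ 0 ∧ x = (a : K) / (b : K))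
    (hB : B = Subring.closure ((A : Set K) ∪ {u, u⁻¹}))
    (hu : ∃ v ∈ B, u * v = 1)
    (hflat : letI := (Subring.inclusion h).toAlgebra; Module.Flat A B) :
    B = Subring.closure ((A : Set K) ∪ {u + u⁻¹}) := by
  letI := (Subring.inclusion h).toAlgebra
  haveI hflat' : Module.Flat A B := hflat
  -- u ≠ 0
  obtain ⟨v, hvB, huv⟩ := hu
  have hu0 : u ≠ 0 := by
    rintro rfl
    simp at huv
  set C := Subring.closure ((A : Set K) ∪ {u + u⁻¹}) with hC
  have hAC : ∀ a : A, (a : K) ∈ C := fun a =>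
    Subring.subset_closure (Or.inl a.2)
  have hsC : u + u⁻¹ ∈ C := Subring.subset_closure (Or.inr rfl)
  have huB : u ∈ B := by
    rw [hB]; exact Subring.subset_closure (Or.inr (Or.inl rfl))
  have huiB : u⁻¹ ∈ B := by
    rw [hB]; exact Subring.subset_closure (Or.inr (Or.inr rfl))
  have hsq : u * u = (u + u⁻¹) * u - 1 := by field_simp; ring
  -- decomposition of B as C + C·u
  have hdecomp : ∀ b : K, b ∈ B → ∃ c d : K, c ∈ C ∧ d ∈ C ∧ b = c + d * u := by
    intro b hb
    rw [hB] at hb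
    induction hb using Subring.closure_induction with
    | mem x hx =>
      rcases hx with hx | hx | hx
      · exact ⟨x, 0, Subring.subset_closure (Or.inl hx), C.zero_mem, by ring⟩
      · exact ⟨0, 1, C.zero_mem, C.one_mem, by rw [hx]; ring⟩
      · refine ⟨u + u⁻¹, -1, hsC, C.neg_mem C.one_mem, ?_⟩
        rw [Set.mem_singleton_iff] at hx
        rw [hx]; ring
    | zero => exact ⟨0, 0, C.zero_mem, C.zero_mem, by ring⟩
    | one => exact ⟨1, 0, C.one_mem, C.zero_mem, by ring⟩
    | add x y hx hy ihx ihy =>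
      obtain ⟨c1, d1, hc1, hd1, rfl⟩ := ihx
      obtain ⟨c2, d2, hc2, hd2, rfl⟩ := ihy
      exact ⟨c1 + c2, d1 + d2, C.add_mem hc1 hc2, C.add_mem hd1 hd2, by ring⟩
    | neg x hx ihx =>
      obtain ⟨c1, d1, hc1, hd1, rfl⟩ := ihx
      exact ⟨-c1, -d1, C.neg_mem hc1, C.neg_mem hd1, by ring⟩
    | mul x y hx hy ihx ihy =>
      obtain ⟨c1, d1, hc1, hd1, rfl⟩ := ihx
      obtain ⟨c2, d2, hc2, hd2, rfl⟩ := ihy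
      refine ⟨c1 * c2 - d1 * d2, c1 * d2 + d1 * c2 + d1 * d2 * (u + u⁻¹),
        C.sub_mem (C.mul_mem hc1 hc2) (C.mul_mem hd1 hd2),
        C.add_mem (C.add_mem (C.mul_mem hc1 hd2) (C.mul_mem hd1 hc2))
          (C.mul_mem (C.mul_mem hd1 hd2) hsC), ?_⟩
      have : (c1 + d1 * u) * (c2 + d2 * u)
          = c1 * c2 + (c1 * d2 + d1 * c2) * u + (d1 * d2) * (u * u) := by ring
      rw [this, hsq]; ring
  -- coercion of scalar multiplication
  have smul_coe : ∀ (r : A) (m : B), ((r • m : B) : K) = (r : K) * (m : K) := by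
    intro r m
    rw [Algebra.smul_def]
    rfl
  -- set up the relation a₀ • u - a • 1 = 0 in B
  obtain ⟨a, a₀, ha₀, hueq⟩ := hfrac u
  have hau : (a₀ : K) * u = (a : K) := by
    rw [hueq]; field_simp
  let f : ULift.{u} (Fin 2) → A := fun i => ![a₀, -a] i.down
  let x : ULift.{u} (Fin 2) → B := fun i => ![⟨u, huB⟩, 1] i.down
  have hrel : ∑ i, f i • x i = 0 := by
    apply Subtype.coe_injective
    push_cast
    simp only [smul_coe]
    rw [← Equiv.sum_comp (Equiv.ulift.symm : Fin 2 ≃ ULift.{u} (Fin 2))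
      (fun i => ((f i : A) : K) * ((x i : B) : K)), Fin.sum_univ_two]
    simp only [f, x, Equiv.ulift, Equiv.coe_fn_symm_mk, Matrix.cons_val_zero,
      Matrix.cons_val_one, Matrix.head_cons]
    push_cast
    rw [hau]
    ring
  have crit := Module.Flat.isTrivialRelation_of_sum_smul_eq_zero
    (R := A) (M := B) (f := f) (x := x) hrel
  obtain ⟨κ, c, y, hxy, hfc⟩ := crit
  -- coefficient relations: c ⟨1⟩ j * u = c ⟨0⟩ j
  have hcu : ∀ j, (c ⟨1⟩ j : K) * u = (c ⟨0⟩ j : K) := by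
    intro j
    have h2 := congrArg (fun r : A => (r : K)) (hfc j)
    push_cast at h2
    rw [← Equiv.sum_comp (Equiv.ulift.symm : Fin 2 ≃ ULift.{u} (Fin 2))
      (fun i => ((f i : A) : K) * ((c i j : A) : K)), Fin.sum_univ_two] at h2
    simp only [f, Equiv.ulift, Equiv.coe_fn_symm_mk, Matrix.cons_val_zero,
      Matrix.cons_val_one, Matrix.head_cons] at h2
    push_cast at h2
    apply mul_left_cancel₀ ha₀
    linear_combination (c ⟨1⟩ j : K) * hau - h2
  -- the unit relation: 1 = ∑ c ⟨1⟩ j • y j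
  have hone : (1 : K) = ∑ j, (c ⟨1⟩ j : K) * (y j : K) := by
    have h1 := congrArg (fun b : B => (b : K)) (hxy ⟨1⟩)
    push_cast at h1
    simp only [smul_coe] at h1
    simp only [x, Matrix.cons_val_one, Matrix.head_cons] at h1
    push_cast at h1
    exact h1
  -- decompose each y j
  choose d e hd he hy using fun j => hdecomp (y j) (y j).2
  set P : K := ∑ j, (c ⟨1⟩ j : K) * d j with hP
  set Q : K := ∑ j, (c ⟨1⟩ j : K) * e j with hQ
  have h1PQ : (1 : K) = P + Q * u := by
    rw [hone, hP, hQ, Finset.sum_mul, ← Finset.sum_add_distrib]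
    apply Finset.sum_congr rfl
    intro j _
    rw [hy j]; ring
  have hPu : P * u ∈ C := by
    rw [hP, Finset.sum_mul]
    apply Subring.sum_mem
    intro j _
    have : (c ⟨1⟩ j : K) * d j * u = (c ⟨0⟩ j : K) * d j := by
      rw [← hcu j]; ring
    rw [this]
    exact C.mul_mem (hAC _) (hd j)
  have hQu : Q * u ∈ C := by
    rw [hQ, Finset.sum_mul]
    apply Subring.sum_mem
    intro j _
    have : (c ⟨1⟩ j : K) * e j * u = (c ⟨0⟩ j : K) * e j := by
      rw [← hcu j]; ring
    rw [this]
    exact C.mul_mem (hAC _) (he j)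
  have hQC : Q ∈ C := by
    rw [hQ]
    exact Subring.sum_mem _ fun j _ => C.mul_mem (hAC _) (he j)
  have hkey : u = P * u + ((u + u⁻¹) * (Q * u) - Q) := by
    have : P * u + ((u + u⁻¹) * (Q * u) - Q)
        = (P + Q * u) * u + Q * (u * u⁻¹) - Q := by ring
    rw [this, mul_inv_cancel₀ hu0, ← h1PQ]
    ring
  have huC : u ∈ C := by
    rw [hkey]
    exact C.add_mem hPu (C.sub_mem (C.mul_mem hsC hQu) hQC)
  have huiC : u⁻¹ ∈ C := by
    have : u⁻¹ = (u + u⁻¹) - u := by ring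
    rw [this]
    exact C.sub_mem hsC huC
  apply le_antisymm
  · rw [hB]
    apply Subring.closure_le.mpr
    rintro z (hz | hz | hz)
    · exact Subring.subset_closure (Or.inl hz)
    · rwa [hz]
    · rw [Set.mem_singleton_iff] at hz
      rwa [hz]
  · apply Subring.closure_le.mpr
    rintro z (hz | hz)
    · exact h hz
    · rw [Set.mem_singleton_iff] at hz
      rw [hz]
      exact B.add_mem huB huiB


theorem stmt18 {K : Type*} [Field K] (A B : Subring K) (h : A ≤ B) (u : K)
    (hfrac : ∀ x : K, ∃ a b : A, (b : K) ≠ 0 ∧ x = (a : K) / (b : K))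
    (hB : B = Subring.closure ((A : Set K) ∪ {u, u⁻¹}))
    (hu : ∃ v ∈ B, u * v = 1)
    (hflat : letI := (Subring.inclusion h).toAlgebra; Module.Flat A B) :
    B = Subring.closure ((A : Set K) ∪ {u + u⁻¹}) :=
  stmt18aux A B h u hfrac hB hu hflat
end

section
/- Let B be a well-centered overring of an integral domain A and let S be a multiplicatively closed subset of A such that A = A_S ∩ B and B_S is a localization of A_S. Then B is a localization of A. -/
theorem stmt19 {K : Type*} [Field K] (A B : Subring K) (hAB : A ≤ B)
    (hfrac : ∀ x : K, ∃ a b : A, (b : K) ≠ 0 ∧ x = (a : K) / (b : K))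
    (hwc : ∀ b ∈ B, ∃ u : Bˣ, ((u : B) : K) * b ∈ A)
    (S : Set A) (hS1 : (1 : A) ∈ S) (hSmul : ∀ s ∈ S, ∀ t ∈ S, s * t ∈ S)
    (hS0 : (0 : A) ∉ S)
    (hint : ∀ x : K, x ∈ A ↔ (x ∈ B ∧ ∃ a : A, ∃ s ∈ S, x = (a : K) / (s : K)))
    (hlocS : IsLocOf {x : K | ∃ a : A, ∃ s ∈ S, x = (a : K) / (s : K)}
      {x : K | ∃ b ∈ B, ∃ s ∈ S, x = b / (s : K)}) :
    IsLocOf (A : Set K) (B : Set K) := by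
  classical
  obtain ⟨T', hT'sub, hT'1, hT'mul, hT'0, hT'eq⟩ := hlocS
  -- coercion of elements of S is nonzero
  have hSne : ∀ s : A, s ∈ S → (s : K) ≠ 0 := by
    intro s hs h0
    have : s = 0 := by exact_mod_cast h0
    exact hS0 (this ▸ hs)
  refine ⟨{x : K | x ∈ A ∧ x ≠ 0 ∧ x⁻¹ ∈ (B : Set K)}, ?_, ?_, ?_, ?_, ?_⟩
  · exact fun x hx => hx.1
  · exact ⟨A.one_mem, one_ne_zero, by simpa using B.one_mem⟩
  · rintro s ⟨hsA, hs0, hsB⟩ t ⟨htA, ht0, htB⟩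
    exact ⟨A.mul_mem hsA htA, mul_ne_zero hs0 ht0,
      by rw [mul_inv]; exact B.mul_mem hsB htB⟩
  · rintro ⟨-, h, -⟩
    exact h rfl
  · ext x
    simp only [Set.mem_setOf_eq, SetLike.mem_coe]
    constructor
    · intro hxB
      -- x ∈ B_S
      have hxBS : x ∈ {y : K | ∃ b ∈ B, ∃ s ∈ S, y = b / (s : K)} :=
        ⟨x, hxB, 1, hS1, by simp⟩
      rw [hT'eq] at hxBS
      obtain ⟨α, hα, t₀, ht₀T', hxeq⟩ := hxBS
      obtain ⟨a₁, s₁, hs₁S, hαeq⟩ := hα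
      obtain ⟨a₂, s₂, hs₂S, ht₀eq⟩ := hT'sub ht₀T'
      have hs₁ : (s₁ : K) ≠ 0 := hSne s₁ hs₁S
      have hs₂ : (s₂ : K) ≠ 0 := hSne s₂ hs₂S
      have ht₀ : t₀ ≠ 0 := fun h => hT'0 (h ▸ ht₀T')
      have ha₂ : (a₂ : K) ≠ 0 := by
        intro h
        apply ht₀
        rw [ht₀eq, h, zero_div]
      -- t₀⁻¹ is in B_S
      have ht₀inv : t₀⁻¹ ∈ {y : K | ∃ b ∈ B, ∃ s ∈ S, y = b / (s : K)} := by
        rw [hT'eq]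
        exact ⟨1, ⟨1, 1, hS1, by simp⟩, t₀, ht₀T', (one_div _).symm⟩
      obtain ⟨b₀, hb₀B, s₀, hs₀S, hb₀eq⟩ := ht₀inv
      have hs₀ : (s₀ : K) ≠ 0 := hSne s₀ hs₀S
      have hb₀ : b₀ = (s₀ : K) * s₂ / a₂ := by
        have : b₀ = (s₀ : K) * t₀⁻¹ := by
          rw [hb₀eq]
          field_simp
        rw [this, ht₀eq]
        field_simp
      set q : K := (s₁ : K) * (a₂ : K) with hqdef
      have hq : q ≠ 0 := mul_ne_zero hs₁ ha₂
      have hqA : q ∈ A := A.mul_mem s₁.2 a₂.2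
      have hxq : x * q = (a₁ : K) * s₂ := by
        rw [hxeq, hαeq, ht₀eq, hqdef]
        field_simp
      -- s₃ := s₀ * s₁ * s₂
      set s₃ : A := s₀ * s₁ * s₂ with hs₃def
      have hs₃S : s₃ ∈ S := hSmul _ (hSmul _ hs₀S _ hs₁S) _ hs₂S
      have hs₃ : (s₃ : K) ≠ 0 := hSne s₃ hs₃S
      have hs₃K : (s₃ : K) = (s₀ : K) * s₁ * s₂ := by push_cast [hs₃def]; ring
      have h3 : q * b₀ = (s₃ : K) := by
        rw [hb₀, hqdef, hs₃K]
        field_simp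
      obtain ⟨u, huA'⟩ := hwc b₀ hb₀B
      set uK : K := ((u : B) : K) with huKdef
      set vK : K := (((u⁻¹ : Bˣ) : B) : K) with hvKdef
      have huv : uK * vK = 1 := by
        have h1 : ((u : B) * ((u⁻¹ : Bˣ) : B) : B) = 1 := by
          rw [← Units.val_mul, mul_inv_cancel, Units.val_one]
        have := congrArg (fun b : B => (b : K)) h1
        push_cast at this
        exact this
      have hu0 : uK ≠ 0 := by
        intro h
        rw [h, zero_mul] at huv
        exact one_ne_zero huv.symm
      have huB : uK ∈ B := (u : B).2
      have hvB : vK ∈ B := ((u⁻¹ : Bˣ) : B).2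
      -- a₃ := uK * b₀ ∈ A
      set a₃ : K := uK * b₀ with ha₃def
      have ha₃A : a₃ ∈ A := huA'
      have huk : uK * (s₃ : K) = q * a₃ := by
        rw [← h3, ha₃def]; ring
      -- uK ∈ A by hint
      have huA : uK ∈ A := by
        refine (hint uK).2 ⟨huB, ⟨⟨q, hqA⟩ * ⟨a₃, ha₃A⟩, s₃, hs₃S, ?_⟩⟩
        push_cast
        rw [eq_div_iff hs₃]
        exact huk
      -- x * uK ∈ A by hint
      have hxuB : x * uK ∈ B := B.mul_mem hxB huB
      have hxueq : x * uK = ((a₁ : K) * s₂ * a₃) / (s₃ : K) := by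
        rw [← hxq, eq_div_iff hs₃]
        calc x * uK * (s₃ : K) = x * (uK * (s₃ : K)) := by ring
          _ = x * (q * a₃) := by rw [huk]
          _ = x * q * a₃ := by ring
      have hxuA : x * uK ∈ A := by
        refine (hint (x * uK)).2 ⟨hxuB, ⟨a₁ * s₂ * ⟨a₃, ha₃A⟩, s₃, hs₃S, ?_⟩⟩
        push_cast
        exact hxueq
      -- conclude
      have hvinv : uK⁻¹ = vK := inv_eq_of_mul_eq_one_right huv
      refine ⟨x * uK, hxuA, uK, ⟨huA, hu0, ?_⟩, ?_⟩
      · rw [hvinv]; exact hvB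
      · field_simp
    · rintro ⟨a, haA, t, ⟨htA, ht0, htB⟩, rfl⟩
      rw [div_eq_mul_inv]
      exact B.mul_mem (hAB haA) htB
end
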